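/- Let A = (A, ∘) with x ∘ y = φ(x) + φ(y) for an automorphism φ of a group (A,+) of order k. Then A satisfies a bracketing identity t ≈ t' if and only if d_T(i) ≡ d_{T'}(i) (mod k) for all leaves i, where T, T' are the binary trees of t, t'. -/

import Mathlib

/-!
Unfolding `x ∘ y = φ x + φ y` along a tree `T`, every leaf variable passes through one
application of `φ` per edge on its path to the root, so the term operation of `T` is
`x₀, …, xₙ₋₁ ↦ φ^{d_T(0)} x₀ + ⋯ + φ^{d_T(n-1)} xₙ₋₁`. Two such sums agree for all inputs
iff they agree on inputs supported at a single leaf, i.e. iff `φ^{d_T(i)} = φ^{d_{T'}(i)}`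
for every `i`, which says `d_T(i) ≡ d_{T'}(i) (mod k)`.
-/

/-- Binary trees: every internal vertex has exactly a left and a right child. -/
inductive BTree : Type where
  | leaf : BTree
  | node : BTree → BTree → BTree

namespace BTree

/-- Number of leaves. -/
def numLeaves : BTree → ℕ
  | leaf => 1
  | node l r => l.numLeaves + r.numLeaves

/-- Addresses of the leaves in left-to-right order, as words over `{0,1}`;
`false` records a left step (0) and `true` a right step (1). -/
def addrs : BTree → List (List Bool)
  | leaf => [[]]
  | node l r => (l.addrs.map (fun w => false :: w)) ++ (r.addrs.map (fun w => true :: w))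

/-- Address of the `i`-th leaf (0-indexed, left to right). -/
def addr (T : BTree) (i : ℕ) : List Bool := T.addrs.getD i []

/-- Left depth of the `i`-th leaf: number of left steps (0's) in its address. -/
def ld (T : BTree) (i : ℕ) : ℕ := (T.addr i).count false

/-- Right depth of the `i`-th leaf: number of right steps (1's) in its address. -/
def rd (T : BTree) (i : ℕ) : ℕ := (T.addr i).count true

/-- Total depth of the `i`-th leaf. -/
def depth (T : BTree) (i : ℕ) : ℕ := (T.addr i).length

end BTree

/-- Evaluation of the bracketing corresponding to a binary tree, with the
variables `f k, f (k+1), ...` plugged in at the leaves, left to right. -/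
def BTree.evalAux {A : Type*} (op : A → A → A) (f : ℕ → A) : BTree → ℕ → A
  | .leaf, k => f k
  | .node l r, k => op (l.evalAux op f k) (r.evalAux op f (k + l.numLeaves))

/-- Term operation induced on `A` by the bracketing corresponding to `T`. -/
def BTree.eval {A : Type*} (op : A → A → A) (T : BTree) (f : ℕ → A) : A :=
  T.evalAux op f 0

/-- `φ_w` for a word `w` over `{0,1}`: `φ_ε = id`, `φ_{0w} = φ₀ ∘ φ_w`, `φ_{1w} = φ₁ ∘ φ_w`. -/
def phiWord {A : Type*} (φ₀ φ₁ : A → A) : List Bool → A → A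
  | [] => id
  | c :: w => (if c then φ₁ else φ₀) ∘ phiWord φ₀ φ₁ w

namespace BTree

lemma length_addrs (T : BTree) : T.addrs.length = T.numLeaves := by
  induction T with
  | leaf => rfl
  | node l r ihl ihr => simp [addrs, numLeaves, ihl, ihr]

lemma addr_node_of_lt (l r : BTree) {i : ℕ} (h : i < l.numLeaves) :
    (node l r).addr i = false :: l.addr i := by
  have hi : i < l.addrs.length := l.length_addrs ▸ h
  rw [addr, addrs, List.getD_append _ _ _ _ (by simpa using hi)]
  simp [addr, List.getD_eq_getElem?_getD, hi]

lemma addr_node_add (l r : BTree) {j : ℕ} (h : j < r.numLeaves) :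
    (node l r).addr (l.numLeaves + j) = true :: r.addr j := by
  have hj : j < r.addrs.length := r.length_addrs ▸ h
  rw [addr, addrs, List.getD_append_right _ _ _ _ (by simp [length_addrs])]
  simp [addr, List.getD_eq_getElem?_getD, length_addrs, List.getElem?_eq_getElem hj]

lemma depth_node_of_lt (l r : BTree) {i : ℕ} (h : i < l.numLeaves) :
    (node l r).depth i = l.depth i + 1 := by
  simp [depth, addr_node_of_lt l r h]

lemma depth_node_add (l r : BTree) {j : ℕ} (h : j < r.numLeaves) :
    (node l r).depth (l.numLeaves + j) = r.depth j + 1 := by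
  simp [depth, addr_node_add l r h]

section AddAut

variable {A : Type*} [AddMonoid A] (φ : AddAut A)

lemma evalAux_eq_sum_depth (f : ℕ → A) (T : BTree) (s : ℕ) :
    T.evalAux (fun x y => φ x + φ y) f s
      = ((List.range T.numLeaves).map fun i => (T.depth i • φ) (f (s + i))).sum := by
  induction T generalizing s with
  | leaf => simp [evalAux, numLeaves, depth, addr, addrs]
  | node l r ihl ihr =>
    rw [evalAux, ihl, ihr, map_list_sum φ, map_list_sum φ, numLeaves, List.range_add,
      List.map_append, List.sum_append, List.map_map, List.map_map, List.map_map]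
    congr 2
    · refine List.map_congr_left fun i hi => ?_
      rw [List.mem_range] at hi
      simp [depth_node_of_lt l r hi, succ_nsmul']
    · refine List.map_congr_left fun j hj => ?_
      rw [List.mem_range] at hj
      simp [depth_node_add l r hj, succ_nsmul', add_assoc]

lemma eval_eq_sum_depth (T : BTree) (f : ℕ → A) :
    T.eval (fun x y => φ x + φ y) f
      = ((List.range T.numLeaves).map fun i => (T.depth i • φ) (f i)).sum := by
  simp [eval, evalAux_eq_sum_depth]

lemma eval_single (T : BTree) {i : ℕ} (hi : i < T.numLeaves) (a : A) :
    T.eval (fun x y => φ x + φ y) (Pi.single i a) = (T.depth i • φ) a := by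
  rw [eval_eq_sum_depth, List.sum_map_eq_nsmul_single i, Pi.single_eq_same,
    List.count_eq_one_of_mem List.nodup_range (List.mem_range.mpr hi), one_nsmul]
  intro j hj _
  rw [Pi.single_eq_of_ne hj, map_zero]

end AddAut

end BTree

theorem stmt11_general (A : Type*) [AddGroup A] (φ : AddAut A) (k : ℕ)
    (hk : addOrderOf φ = k)
    (T T' : BTree) (n : ℕ) (hT : T.numLeaves = n) (hT' : T'.numLeaves = n) :
    (∀ f : ℕ → A, T.eval (fun x y => φ x + φ y) f
        = T'.eval (fun x y => φ x + φ y) f) ↔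
      ∀ i < n, Nat.ModEq k (T.depth i) (T'.depth i) := by
  subst hk hT
  constructor
  · intro h i hi
    rw [← nsmul_eq_nsmul_iff_modEq]
    ext a
    simpa [BTree.eval_single φ _ hi, BTree.eval_single φ _ (hT' ▸ hi)] using h (Pi.single i a)
  · intro h f
    rw [BTree.eval_eq_sum_depth, BTree.eval_eq_sum_depth, hT']
    refine congrArg List.sum (List.map_congr_left fun i hi => ?_)
    rw [nsmul_eq_nsmul_iff_modEq.mpr (h i (List.mem_range.mp hi))]

/-- If `x ∘ y = φ(x) + φ(y)` with `φ` of order `k`, then `t ≈ t'` holds iff the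
depth sequences of the two trees agree modulo `k`. -/
theorem stmt11 (A : Type*) [AddGroup A] (φ : AddAut A) (k : ℕ)
    (hk : addOrderOf φ = k) (hk0 : 0 < k)
    (T T' : BTree) (n : ℕ) (hT : T.numLeaves = n) (hT' : T'.numLeaves = n) :
    (∀ f : ℕ → A, T.eval (fun x y => φ x + φ y) f
        = T'.eval (fun x y => φ x + φ y) f) ↔
      ∀ i < n, Nat.ModEq k (T.depth i) (T'.depth i) :=
  stmt11_general A φ k hk T T' n hT hT'
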